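/- arXiv:2410.19844 — 3 statements merged into one kernel-verified Lean document; each statement's English description precedes it below -/
import Mathlib

section
/- A polynomial p of degree 2d is a sum of squares if and only if its homogenization p̃ (a homogeneous polynomial of degree 2d in n+1 variables) is a sum of squares. -/
open MvPolynomial

/-- `p` is a sum of squares of polynomials. -/
def IsSOS {n : ℕ} (p : MvPolynomial (Fin n) ℝ) : Prop :=
  ∃ (k : ℕ) (q : Fin k → MvPolynomial (Fin n) ℝ), p = ∑ i, q i ^ 2

/-- The degree-`D` homogenization of `p ∈ ℝ[x₁,…,xₙ]`. -/
noncomputable def homogenize (n D : ℕ) (p : MvPolynomial (Fin n) ℝ) :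
    MvPolynomial (Fin (n + 1)) ℝ :=
  ∑ s ∈ p.support,
    MvPolynomial.monomial
      (Finsupp.single (0 : Fin (n + 1)) (D - s.sum fun _ e => e) +
        s.mapDomain Fin.succ) (p.coeff s)

/-!
Homogenization is additive, turns `f * g` into `f̃ * g̃` when the degrees are added, and is undone
by setting `x₀ = 1`; so an SOS decomposition of `p̃` dehomogenizes to one of `p`.
Conversely, if `p = ∑ qᵢ²` then every `qᵢ` has degree at most `d`: under a degree-compatible
monomial order, let `D` be the largest leading monomial of the `qᵢ`; the coefficient of `p` at `2D`
is the sum of the squares of the coefficients of the `qᵢ` at `D`, one of which is a nonzero leading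
coefficient, so it cannot vanish. Homogenizing each `qᵢ` in degree `d` then writes `p̃` as a sum
of squares.
-/

theorem Finsupp.single_zero_add_mapDomain_succ {n : ℕ} {M : Type*} [AddCommMonoid M] (a : M)
    (s : Fin n →₀ M) : single 0 a + s.mapDomain Fin.succ = cons a s := by
  ext i
  cases i using Fin.cases with
  | zero => simp [mapDomain_of_notMem_range]
  | succ i => simp [mapDomain_apply (Fin.succ_injective n)]

theorem Finsupp.cons_add {n : ℕ} {M : Type*} [AddZeroClass M] (a b : M) (s t : Fin n →₀ M) :
    cons (a + b) (s + t) = cons a s + cons b t := by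
  ext i
  cases i using Fin.cases <;> simp

theorem MvPolynomial.two_mul_totalDegree_le_totalDegree_sum_sq {σ R ι : Type*} [LinearOrder σ]
    [WellFoundedGT σ] [CommRing R] [LinearOrder R] [IsStrictOrderedRing R] {s : Finset ι}
    {q : ι → MvPolynomial σ R} {i : ι} (hi : i ∈ s) :
    2 * (q i).totalDegree ≤ (∑ j ∈ s, q j ^ 2).totalDegree := by
  let m : MonomialOrder σ := .degLex
  obtain ⟨j, hj, hmax⟩ := s.exists_max_image (fun j => m.toSyn (m.degree (q j))) ⟨i, hi⟩
  have hij : (q i).totalDegree ≤ (q j).totalDegree := degLex_totalDegree_monotone (hmax i hi)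
  rcases eq_or_ne (q j) 0 with hj0 | hj0
  · rw [hj0, totalDegree_zero, Nat.le_zero] at hij
    simp [hij]
  set D := m.degree (q j)
  have hcoeff : (∑ k ∈ s, q k ^ 2).coeff (D + D) = ∑ k ∈ s, (q k).coeff D ^ 2 := by
    rw [coeff_sum]
    refine Finset.sum_congr rfl fun k hk => ?_
    rw [sq, sq, m.coeff_mul_of_add_of_degree_le (hmax k hk) (hmax k hk)]
  have hpos : 0 < ∑ k ∈ s, (q k).coeff D ^ 2 :=
    Finset.sum_pos' (fun k _ => sq_nonneg _)
      ⟨j, hj, sq_pos_of_ne_zero (m.coeff_degree_ne_zero_iff.2 hj0)⟩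
  calc 2 * (q i).totalDegree ≤ 2 * (q j).totalDegree := by omega
    _ = (D + D).degree := by rw [map_add, degree_degLexDegree]; ring
    _ ≤ _ := le_totalDegree (mem_support_iff.2 (hcoeff ▸ hpos.ne'))

theorem IsSOS.map {m n : ℕ} {F : Type*}
    [FunLike F (MvPolynomial (Fin m) ℝ) (MvPolynomial (Fin n) ℝ)]
    [RingHomClass F (MvPolynomial (Fin m) ℝ) (MvPolynomial (Fin n) ℝ)]
    {p : MvPolynomial (Fin m) ℝ} (hp : IsSOS p) (φ : F) : IsSOS (φ p) := by
  obtain ⟨k, q, rfl⟩ := hp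
  exact ⟨k, fun i => φ (q i), by simp only [map_sum, map_pow]⟩

theorem homogenize_eq_sum {n D : ℕ} (p : MvPolynomial (Fin n) ℝ) :
    homogenize n D p =
      ∑ s ∈ p.support, monomial (Finsupp.cons (D - s.degree) s) (p.coeff s) := by
  simp only [homogenize, Finsupp.single_zero_add_mapDomain_succ]
  rfl

theorem homogenize_add {n D : ℕ} (p q : MvPolynomial (Fin n) ℝ) :
    homogenize n D (p + q) = homogenize n D p + homogenize n D q := by
  simp only [homogenize_eq_sum, ← sum_def, AddMonoidAlgebra.coeff_add]
  exact Finsupp.sum_add_index' (fun _ => map_zero _) (fun _ => map_add _)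

theorem homogenize_sum {ι : Type*} {n D : ℕ} (s : Finset ι) (f : ι → MvPolynomial (Fin n) ℝ) :
    homogenize n D (∑ i ∈ s, f i) = ∑ i ∈ s, homogenize n D (f i) :=
  map_sum (AddMonoidHom.mk' (homogenize n D) homogenize_add) f s

theorem homogenize_monomial {n D : ℕ} (s : Fin n →₀ ℕ) (c : ℝ) :
    homogenize n D (monomial s c) = monomial (Finsupp.cons (D - s.degree) s) c := by
  classical
  rw [homogenize_eq_sum, support_monomial]
  split_ifs with hc <;> simp [hc]

theorem homogenize_mul {n A B : ℕ} {f g : MvPolynomial (Fin n) ℝ} (hf : f.totalDegree ≤ A)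
    (hg : g.totalDegree ≤ B) :
    homogenize n (A + B) (f * g) = homogenize n A f * homogenize n B g := by
  have hfg : f * g =
      ∑ s ∈ f.support, ∑ t ∈ g.support, monomial (s + t) (f.coeff s * g.coeff t) := by
    conv_lhs => rw [f.as_sum, g.as_sum, Finset.sum_mul_sum]
    simp only [monomial_mul]
  simp only [hfg, homogenize_sum, homogenize_eq_sum f, homogenize_eq_sum g, Finset.sum_mul_sum]
  refine Finset.sum_congr rfl fun s hs => Finset.sum_congr rfl fun t ht => ?_
  have hsA : s.degree ≤ A := (le_totalDegree hs).trans hf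
  have htB : t.degree ≤ B := (le_totalDegree ht).trans hg
  rw [homogenize_monomial, monomial_mul, ← Finsupp.cons_add, map_add]
  congr 3
  omega

theorem homogenize_pow {n A : ℕ} {f : MvPolynomial (Fin n) ℝ} (hf : f.totalDegree ≤ A) (k : ℕ) :
    homogenize n (k * A) (f ^ k) = homogenize n A f ^ k := by
  induction k with
  | zero => simpa using homogenize_monomial (n := n) (D := 0) 0 1
  | succ k ih =>
    have hfk : (f ^ k).totalDegree ≤ k * A :=
      (totalDegree_pow f k).trans (Nat.mul_le_mul_left k hf)
    rw [pow_succ, pow_succ, add_one_mul, homogenize_mul hfk hf, ih]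

noncomputable def dehomogenize (R : Type*) [CommSemiring R] (n : ℕ) :
    MvPolynomial (Fin (n + 1)) R →ₐ[R] MvPolynomial (Fin n) R :=
  aeval (Fin.cons 1 X)

theorem dehomogenize_monomial_cons {R : Type*} [CommSemiring R] {n : ℕ} (a : ℕ)
    (s : Fin n →₀ ℕ) (c : R) :
    dehomogenize R n (monomial (Finsupp.cons a s) c) = monomial s c := by
  simp [dehomogenize, monomial_eq, Finsupp.prod_fintype, Fin.prod_univ_succ]

theorem dehomogenize_homogenize {n D : ℕ} (p : MvPolynomial (Fin n) ℝ) :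
    dehomogenize ℝ n (homogenize n D p) = p := by
  simp only [homogenize_eq_sum, map_sum, dehomogenize_monomial_cons]
  exact p.as_sum.symm

/-- A polynomial `p` of degree `2d` is a sum of squares iff its homogenization
(a homogeneous polynomial of degree `2d` in `n+1` variables) is a sum of squares. -/
theorem sos_iff_homogenization_sos (n d : ℕ) (p : MvPolynomial (Fin n) ℝ)
    (hdeg : p.totalDegree = 2 * d) :
    IsSOS p ↔ IsSOS (homogenize n (2 * d) p) := by
  constructor
  · rintro ⟨k, q, rfl⟩
    have hq : ∀ i, (q i).totalDegree ≤ d := fun i => by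
      have := two_mul_totalDegree_le_totalDegree_sum_sq (q := q) (Finset.mem_univ i)
      omega
    refine ⟨k, fun i => homogenize n d (q i), ?_⟩
    rw [homogenize_sum]
    exact Finset.sum_congr rfl fun i _ => homogenize_pow (hq i) 2
  · intro h
    simpa only [dehomogenize_homogenize] using h.map (dehomogenize ℝ n)
end

section
/- Every univariate real polynomial that is nonnegative on all of R is a sum of two squares of real polynomials. -/
open Polynomial Filter

private lemma eval_nonneg_of_forall_ne {h : ℝ[X]} {a : ℝ} (H : ∀ t, t ≠ a → 0 ≤ h.eval t) :
    ∀ t : ℝ, 0 ≤ h.eval t := by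
  intro t
  rcases eq_or_ne t a with rfl | ht
  · have hc : Tendsto (fun x => h.eval x) (nhdsWithin t {t}ᶜ) (nhds (h.eval t)) :=
      (h.continuous.tendsto t).mono_left nhdsWithin_le_nhds
    refine ge_of_tendsto hc ?_
    filter_upwards [self_mem_nhdsWithin] with x hx
    exact H x hx
  · exact H t ht

private lemma sq_dvd_of_nonneg {p : ℝ[X]} (hp : ∀ t : ℝ, 0 ≤ p.eval t) {a : ℝ}
    (ha : p.eval a = 0) : (X - C a) ^ 2 ∣ p := by
  obtain ⟨g, hg⟩ := dvd_iff_isRoot.2 ha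
  have hground : g.eval a = 0 := by
    have hr : Tendsto (fun x => g.eval x) (nhdsWithin a (Set.Ioi a)) (nhds (g.eval a)) :=
      (g.continuous.tendsto a).mono_left nhdsWithin_le_nhds
    have hl : Tendsto (fun x => g.eval x) (nhdsWithin a (Set.Iio a)) (nhds (g.eval a)) :=
      (g.continuous.tendsto a).mono_left nhdsWithin_le_nhds
    have h1 : 0 ≤ g.eval a := by
      refine ge_of_tendsto hr ?_
      filter_upwards [self_mem_nhdsWithin] with x hx
      have hpx := hp x
      rw [hg] at hpx
      simp only [eval_mul, eval_sub, eval_X, eval_C] at hpx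
      have : (0:ℝ) < x - a := sub_pos.2 hx
      nlinarith
    have h2 : g.eval a ≤ 0 := by
      refine le_of_tendsto hl ?_
      filter_upwards [self_mem_nhdsWithin] with x hx
      have hpx := hp x
      rw [hg] at hpx
      simp only [eval_mul, eval_sub, eval_X, eval_C] at hpx
      have : x - a < 0 := sub_neg.2 hx
      nlinarith
    linarith
  obtain ⟨k, hk⟩ := dvd_iff_isRoot.2 hground
  exact ⟨k, by rw [hg, hk]; ring⟩

/-- Every univariate real polynomial that is nonnegative on all of `ℝ` is a sum of
two squares of real polynomials. -/
theorem nonneg_poly_sum_two_squares (p : Polynomial ℝ)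
    (hp : ∀ t : ℝ, 0 ≤ p.eval t) :
    ∃ q r : Polynomial ℝ, p = q ^ 2 + r ^ 2 := by
  suffices H : ∀ n : ℕ, ∀ p : ℝ[X], p.natDegree = n → (∀ t : ℝ, 0 ≤ p.eval t) →
      ∃ q r : ℝ[X], p = q ^ 2 + r ^ 2 from H p.natDegree p rfl hp
  intro n
  induction n using Nat.strong_induction_on with
  | _ n ih =>
    intro p hn hp
    rcases eq_or_ne p 0 with rfl | hp0
    · exact ⟨0, 0, by simp⟩
    rcases Nat.eq_zero_or_pos n with rfl | hnpos
    · -- constant case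
      have hc : p = C (p.coeff 0) := eq_C_of_natDegree_eq_zero hn
      have hcn : 0 ≤ p.coeff 0 := by
        have := hp 0
        rw [hc] at this; simpa using this
      refine ⟨C (Real.sqrt (p.coeff 0)), 0, ?_⟩
      conv_lhs => rw [hc]
      rw [← C_pow, Real.sq_sqrt hcn]
      ring
    -- nonconstant: find a complex root
    have hmapdeg : (p.map (algebraMap ℝ ℂ)).natDegree = n := by
      rw [natDegree_map, hn]
    have hdegpos : 0 < (p.map (algebraMap ℝ ℂ)).degree := by
      rw [← natDegree_pos_iff_degree_pos, hmapdeg]; exact hnpos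
    obtain ⟨z, hz⟩ := Complex.exists_root hdegpos
    have hz' : (aeval z) p = 0 := by
      rwa [aeval_def, ← eval_map]
    set a : ℝ := z.re with ha
    set b : ℝ := z.im with hb
    set d : ℝ[X] := (X - C a) ^ 2 + C b ^ 2 with hd
    have hdvd : d ∣ p := by
      rcases eq_or_ne b 0 with hb0 | hb0
      · -- real root
        have hza : z = algebraMap ℝ ℂ a := by
          apply Complex.ext <;> simp [ha, hb0 ▸ hb.symm]
        have hroot : p.eval a = 0 := by
          have h2 := hz'
          rw [hza, aeval_algebraMap_apply] at h2
          simpa using h2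
        have := sq_dvd_of_nonneg hp hroot
        simpa [hd, hb0] using this
      · -- genuinely complex root
        have hconj : (aeval ((starRingEnd ℂ) z)) p = 0 := by
          rw [Polynomial.aeval_conj, hz', map_zero]
        have hne : z ≠ (starRingEnd ℂ) z := by
          intro h
          have : z.im = 0 := Complex.conj_eq_iff_im.mp h.symm
          exact hb0 (hb ▸ this)
        have hcop : IsCoprime (X - C z) (X - C ((starRingEnd ℂ) z)) :=
          isCoprime_X_sub_C_of_isUnit_sub (sub_ne_zero_of_ne hne).isUnit
        have hdvd1 : (X - C z) ∣ p.map (algebraMap ℝ ℂ) := by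
          rw [dvd_iff_isRoot]
          rwa [IsRoot, eval_map, ← aeval_def]
        have hdvd2 : (X - C ((starRingEnd ℂ) z)) ∣ p.map (algebraMap ℝ ℂ) := by
          rw [dvd_iff_isRoot]
          rwa [IsRoot, eval_map, ← aeval_def]
        have hmul : (X - C z) * (X - C ((starRingEnd ℂ) z)) ∣ p.map (algebraMap ℝ ℂ) :=
          hcop.mul_dvd hdvd1 hdvd2
        have hdmap : d.map (algebraMap ℝ ℂ) = (X - C z) * (X - C ((starRingEnd ℂ) z)) := by
          have hsum : C z + C ((starRingEnd ℂ) z) = C ((2 * a : ℝ) : ℂ) := by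
            rw [← C_add, Complex.add_conj]
          have hprod : C z * C ((starRingEnd ℂ) z) = C ((a ^ 2 + b ^ 2 : ℝ) : ℂ) := by
            rw [← C_mul, Complex.mul_conj]
            congr 1
            rw [Complex.normSq_apply, ha, hb]
            push_cast
            ring
          have expand : (X - C z) * (X - C ((starRingEnd ℂ) z)) =
              X ^ 2 - (C z + C ((starRingEnd ℂ) z)) * X + C z * C ((starRingEnd ℂ) z) := by
            ring
          rw [expand, hsum, hprod, hd]
          simp only [Polynomial.map_add, Polynomial.map_pow, Polynomial.map_sub,
            Polynomial.map_mul, map_X, map_C, Complex.coe_algebraMap,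
            map_mul, map_add, map_ofNat]
          push_cast
          simp only [map_mul, map_add, map_pow, map_ofNat]
          ring
        rw [← hdmap] at hmul
        exact (map_dvd_map' (algebraMap ℝ ℂ)).mp hmul
    obtain ⟨h, hph⟩ := hdvd
    have hh0 : h ≠ 0 := by
      intro h0
      exact hp0 (by rw [hph, h0, mul_zero])
    have hd0 : d ≠ 0 := by
      intro h0
      exact hp0 (by rw [hph, h0, zero_mul])
    have hddeg : d.natDegree = 2 := by
      have hdeq : d = C 1 * X ^ 2 + C (-(2 * a)) * X + C (a ^ 2 + b ^ 2) := by
        simp only [hd, map_neg, map_mul, map_add, map_pow, map_one, C_1, map_ofNat]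
        ring
      rw [hdeq]
      exact natDegree_quadratic one_ne_zero
    have hhdeg : h.natDegree < n := by
      have := natDegree_mul hd0 hh0
      rw [← hph, hn, hddeg] at this
      omega
    have hhnn : ∀ t : ℝ, 0 ≤ h.eval t := by
      apply eval_nonneg_of_forall_ne (a := a)
      intro t ht
      have hpt := hp t
      rw [hph, eval_mul] at hpt
      have hdt : 0 < d.eval t := by
        simp only [hd, eval_add, eval_pow, eval_sub, eval_X, eval_C]
        have : t - a ≠ 0 := sub_ne_zero_of_ne ht
        positivity
      nlinarith
    obtain ⟨q, r, hqr⟩ := ih h.natDegree hhdeg h rfl hhnn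
    refine ⟨(X - C a) * q - C b * r, (X - C a) * r + C b * q, ?_⟩
    rw [hph, hqr, hd]
    ring
end

section
/- With f as above and p = ||f||^2, the coefficient of x_i^2 x_j^2 (for i ≠ j) in p equals ⟨f_{x_i x_j}, f_{x_i x_j}⟩ + (1/2)⟨f_{x_i x_i}, f_{x_j x_j}⟩. -/
open MvPolynomial

/-!
The coefficient of `xᵢ²xⱼ²` in a polynomial `p` is a quarter of the constant term of
`∂ᵢ∂ᵢ∂ⱼ∂ⱼ p`. Expanding `∂ᵢ∂ᵢ∂ⱼ∂ⱼ (q²)` by the Leibniz rule, every term with a factor `q`, `∂ᵢq`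
or `∂ⱼq` has zero constant term because `q` is a quadratic form, which leaves
`4 (∂ᵢ∂ⱼq)² + 2 ∂ᵢ∂ᵢq · ∂ⱼ∂ⱼq`.
-/

namespace MvPolynomial

variable {R σ : Type*} [CommSemiring R] {i j : σ}

lemma constantCoeff_pderiv (p : MvPolynomial σ R) :
    constantCoeff (pderiv i p) = coeff (Finsupp.single i 1) p := by
  classical
  simp [constantCoeff_eq, coeff_pderiv]

lemma constantCoeff_pderiv_pderiv_pderiv_pderiv (hij : i ≠ j) (p : MvPolynomial σ R) :
    constantCoeff (pderiv i (pderiv i (pderiv j (pderiv j p)))) =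
      4 * coeff (Finsupp.single i 2 + Finsupp.single j 2) p := by
  have hexp : Finsupp.single i 1 + Finsupp.single i 1 + Finsupp.single j 1 + Finsupp.single j 1 =
      Finsupp.single i 2 + Finsupp.single j 2 := by
    rw [← Finsupp.single_add, add_assoc, ← Finsupp.single_add]
  simp only [constantCoeff_pderiv, coeff_pderiv, hexp, Finsupp.coe_add, Pi.add_apply,
    Finsupp.single_eq_same, Finsupp.single_eq_of_ne (Ne.symm hij)]
  push_cast
  ring

lemma IsHomogeneous.constantCoeff_pderiv_eq_zero {q : MvPolynomial σ R} {n : ℕ}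
    (hq : q.IsHomogeneous n) (hn : n ≠ 1) : constantCoeff (pderiv i q) = 0 := by
  rw [constantCoeff_pderiv]
  exact hq.coeff_eq_zero (by simpa using Ne.symm hn)

lemma IsHomogeneous.constantCoeff_eq_zero {q : MvPolynomial σ R} {n : ℕ}
    (hq : q.IsHomogeneous n) (hn : n ≠ 0) : constantCoeff q = 0 := by
  rw [constantCoeff_eq]
  exact hq.coeff_eq_zero (by simpa using Ne.symm hn)

lemma IsHomogeneous.constantCoeff_pderiv_pderiv_pderiv_pderiv_sq {q : MvPolynomial σ R}
    (hq : q.IsHomogeneous 2) :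
    constantCoeff (pderiv i (pderiv i (pderiv j (pderiv j (q ^ 2))))) =
      4 * constantCoeff (pderiv i (pderiv j q)) ^ 2 +
        2 * constantCoeff (pderiv i (pderiv i q)) * constantCoeff (pderiv j (pderiv j q)) := by
  have h0 := hq.constantCoeff_eq_zero two_ne_zero
  have hi := hq.constantCoeff_pderiv_eq_zero (i := i) (by norm_num)
  have hj := hq.constantCoeff_pderiv_eq_zero (i := j) (by norm_num)
  simp only [sq, Derivation.leibniz, smul_eq_mul, map_add, map_mul, h0, hi, hj, zero_mul,
    mul_zero, add_zero, zero_add]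
  ring

end MvPolynomial

/-- For `f : ℝⁿ → ℝᵏ` with homogeneous quadratic coordinates and `p = ‖f‖²`,
the coefficient of `xᵢ²xⱼ²` (`i ≠ j`) in `p` equals
`⟨f_{xᵢxⱼ}, f_{xᵢxⱼ}⟩ + (1/2)⟨f_{xᵢxᵢ}, f_{xⱼxⱼ}⟩`. -/
theorem coeff_sq_sq (n k : ℕ) (f : Fin k → MvPolynomial (Fin n) ℝ)
    (hf : ∀ l, (f l).IsHomogeneous 2) (i j : Fin n) (hij : i ≠ j) :
    MvPolynomial.coeff (Finsupp.single i 2 + Finsupp.single j 2) (∑ l, f l ^ 2) =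
      (∑ l, (constantCoeff (pderiv i (pderiv j (f l)))) *
        (constantCoeff (pderiv i (pderiv j (f l))))) +
      (1 / 2) * ∑ l, (constantCoeff (pderiv i (pderiv i (f l)))) *
        (constantCoeff (pderiv j (pderiv j (f l)))) := by
  have hcoeff (l : Fin k) :
      coeff (Finsupp.single i 2 + Finsupp.single j 2) (f l ^ 2) =
        constantCoeff (pderiv i (pderiv i (pderiv j (pderiv j (f l ^ 2))))) / 4 := by
    rw [constantCoeff_pderiv_pderiv_pderiv_pderiv hij]
    ring
  simp only [coeff_sum, hcoeff, (hf _).constantCoeff_pderiv_pderiv_pderiv_pderiv_sq,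
    Finset.mul_sum, ← Finset.sum_add_distrib]
  refine Finset.sum_congr rfl fun l _ => ?_
  ring
end
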